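/- Let x = p·u·r be a string over Σ with u a substring of x, let s₁ be a nonempty suffix of u, and let s₂ be a proper suffix of s₁. Then s₂ ≺ s₁ in V-order, and moreover s₂r ≺ s₁r in V-order (that is, the suffixes of x having s₂ and s₁ as prefixes compare in the same way: the sorting of the suffixes of u is compatible with the sorting of the suffixes of x). -/

import Mathlib

variable {α : Type*} [LinearOrder α]

/-- The star operation on strings: delete the letter `x_h`, where `h` is the
start of the longest non-decreasing suffix (so `h = 1` iff the whole string is
non-decreasing, and otherwise `x_{h-1} > x_h ≤ x_{h+1} ≤ ⋯ ≤ x_n`). -/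
def vstar : List α → List α
  | [] => []
  | a :: t => if List.IsChain (· ≤ ·) (a :: t) then t else a :: vstar t

/-- V-order `≺` between distinct strings `x`, `y`: either `x` lies on the path
`y, y*, y^{2*}, …, ε`, or (if neither lies on the path of the other) taking the
least `s, t` with `x^{(s+1)*} = y^{(t+1)*}` and the greatest position `j` at
which `s = x^{s*}` and `t = y^{t*}` differ, the letter of `x^{s*}` at `j` is
smaller than that of `y^{t*}`. -/
def VLess (x y : List α) : Prop :=
  (∃ k : ℕ, 0 < k ∧ vstar^[k] y = x) ∨
  ((¬ ∃ k : ℕ, vstar^[k] y = x) ∧ (¬ ∃ k : ℕ, vstar^[k] x = y) ∧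
    ∃ s t : ℕ,
      vstar^[s + 1] x = vstar^[t + 1] y ∧
      (∀ s' t' : ℕ, vstar^[s' + 1] x = vstar^[t' + 1] y → s ≤ s' ∧ t ≤ t') ∧
      ∃ j : ℕ, j < (vstar^[s] x).length ∧
        (∀ j' : ℕ, j < j' → (vstar^[s] x)[j']? = (vstar^[t] y)[j']?) ∧
        ∃ a b : α, (vstar^[s] x)[j]? = some a ∧ (vstar^[t] y)[j]? = some b ∧
          a < b)

/-!
Write `y = a ++ z` with `a ≠ []`. A star of `y` deletes inside `a` exactly when `last a :: z` is
non-decreasing, and inside `z` otherwise; hence `y^{n*} = a^{i*} ++ z^{j*}` with `i + j = n`.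
Let `c` be the last letter of `a` to be deleted, from `c :: z^{j*}`. If `j = 0`, then `z` lies
on the star path of `y`. Otherwise the star paths of `z` and `y` first meet at `z^{j*}`: an
earlier meeting `z^{s*} = b ++ z^{(s + |b|)*}` would force `last b :: z^{(s + |b| - 1)*}` to be
non-decreasing, whereas the last letter of the surviving part of `a` only grows, so the failure
of this condition at the latest deletion inside `z` persists. Finally `z^{(j-1)*}` and
`c :: z^{j*}` differ last where the star deleted a letter of `z^{(j-1)*}`, and that letter is
smaller than the one standing there in `c :: z^{j*}`.
-/

theorem vstar_cons_of_isChain {a : α} {t : List α} (h : (a :: t).IsChain (· ≤ ·)) :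
    vstar (a :: t) = t := by
  simp [vstar, h]

theorem vstar_cons_of_not_isChain {a : α} {t : List α} (h : ¬ (a :: t).IsChain (· ≤ ·)) :
    vstar (a :: t) = a :: vstar t := by
  simp [vstar, h]

theorem vstar_singleton (c : α) : vstar [c] = [] :=
  vstar_cons_of_isChain (List.isChain_singleton c)

theorem length_vstar (l : List α) : (vstar l).length = l.length - 1 := by
  induction l with
  | nil => rfl
  | cons a t ih =>
    by_cases h : (a :: t).IsChain (· ≤ ·)
    · simp [vstar_cons_of_isChain h]
    · have ht : t ≠ [] := by rintro rfl; exact h (by simp)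
      have := List.length_pos_iff.mpr ht
      simp only [vstar_cons_of_not_isChain h, List.length_cons, ih]
      omega

theorem length_vstar_iterate (k : ℕ) (l : List α) :
    (vstar^[k] l).length = l.length - k := by
  induction k generalizing l with
  | zero => rfl
  | succ k ih => rw [Function.iterate_succ_apply, ih, length_vstar]; omega

theorem isChain_cons_of_le {a b : α} {w : List α} (hab : a ≤ b)
    (h : (b :: w).IsChain (· ≤ ·)) : (a :: w).IsChain (· ≤ ·) := by
  rw [List.isChain_cons] at h ⊢
  exact ⟨fun y hy => hab.trans (h.1 y hy), h.2⟩

/-- Deleting a letter never decreases the last letter: either the deleted letter is not the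
last one, or it is the last one and then it was smaller than its predecessor. -/
theorem le_of_mem_getLast?_vstar {b : List α} {l l' : α} (hl : l ∈ b.getLast?)
    (hl' : l' ∈ (vstar b).getLast?) : l ≤ l' := by
  induction b with
  | nil => simp at hl
  | cons x t ih =>
    rcases t with _ | ⟨y, t⟩
    · simp [vstar] at hl'
    rw [List.getLast?_cons_cons] at hl
    by_cases hc : (x :: y :: t).IsChain (· ≤ ·)
    · rw [vstar_cons_of_isChain hc] at hl'
      exact le_of_eq (Option.mem_unique hl hl')
    rw [vstar_cons_of_not_isChain hc] at hl'
    by_cases ht : vstar (y :: t) = []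
    · have : t = [] := by simpa [length_vstar] using congrArg List.length ht
      subst this
      simp only [List.getLast?_singleton, Option.mem_def, Option.some.injEq] at hl
      simp only [ht, List.getLast?_singleton, Option.mem_def, Option.some.injEq] at hl'
      subst hl hl'
      exact le_of_lt (by simpa using hc)
    · obtain ⟨v, vs, hv⟩ := List.exists_cons_of_ne_nil ht
      rw [hv, List.getLast?_cons_cons, ← hv] at hl'
      exact ih hl hl'

theorem le_of_mem_getLast?_vstar_iterate {b : List α} {l l' : α} (k : ℕ)
    (hl : l ∈ b.getLast?) (hl' : l' ∈ (vstar^[k] b).getLast?) : l ≤ l' := by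
  induction k generalizing l' with
  | zero => exact le_of_eq (Option.mem_unique hl hl')
  | succ k ih =>
    rw [Function.iterate_succ_apply'] at hl'
    obtain ⟨m, hm⟩ : ∃ m, m ∈ (vstar^[k] b).getLast? :=
      ⟨_, List.getLast?_eq_getLast_of_ne_nil fun h0 => by simp [h0, vstar] at hl'⟩
    exact (ih hm).trans (le_of_mem_getLast?_vstar hm hl')

theorem ne_nil_of_not_isChain_cons {c : α} {w : List α} (h : ¬ (c :: w).IsChain (· ≤ ·)) :
    w ≠ [] := by
  rintro rfl
  simp at h

theorem eq_singleton_of_vstar_eq_nil {b : List α} {c : α} (hc : c ∈ b.getLast?)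
    (h : vstar b = []) : b = [c] := by
  rcases b with _ | ⟨x, _ | ⟨y, t⟩⟩
  · simp at hc
  · simpa [eq_comm] using hc
  · simpa [length_vstar] using congrArg List.length h

theorem vstar_append_of_isChain {b w : List α} {l : α} (hl : l ∈ b.getLast?)
    (h : (l :: w).IsChain (· ≤ ·)) : vstar (b ++ w) = vstar b ++ w := by
  induction b with
  | nil => simp at hl
  | cons x t ih =>
    rcases t with _ | ⟨y, t⟩
    · obtain rfl : x = l := by simpa using hl
      simp [vstar_cons_of_isChain h, vstar]
    rw [List.getLast?_cons_cons] at hl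
    by_cases hc : (x :: y :: t).IsChain (· ≤ ·)
    · have hcw : (x :: (y :: t ++ w)).IsChain (· ≤ ·) := by
        rw [← List.cons_append]
        refine List.isChain_append.mpr ⟨hc, h.tail, fun a ha b hb => ?_⟩
        rw [List.getLast?_cons_cons, hl, Option.mem_some_iff] at ha
        exact ha ▸ (List.isChain_cons.mp h).1 b hb
      rw [List.cons_append, vstar_cons_of_isChain hcw, vstar_cons_of_isChain hc]
    · have hcw : ¬ (x :: (y :: t ++ w)).IsChain (· ≤ ·) :=
        fun hcw => hc (List.isChain_append.mp hcw).1
      rw [List.cons_append, vstar_cons_of_not_isChain hcw, ih hl,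
        vstar_cons_of_not_isChain hc, List.cons_append]

theorem vstar_append_of_not_isChain {b w : List α}
    (h : ∀ l ∈ b.getLast?, ¬ (l :: w).IsChain (· ≤ ·)) :
    vstar (b ++ w) = b ++ vstar w := by
  induction b with
  | nil => rfl
  | cons x t ih =>
    have hcw : ¬ (x :: (t ++ w)).IsChain (· ≤ ·) := by
      rw [← List.cons_append]
      intro hcw
      obtain ⟨-, hw, hjoin⟩ := List.isChain_append.mp hcw
      obtain ⟨l, hl⟩ : ∃ l, l ∈ (x :: t).getLast? :=
        ⟨_, List.getLast?_eq_getLast_of_ne_nil (List.cons_ne_nil x t)⟩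
      exact h l hl (List.isChain_cons.mpr ⟨hjoin l hl, hw⟩)
    rw [List.cons_append, vstar_cons_of_not_isChain hcw, List.cons_append]
    rw [ih fun l hl => h l (List.mem_getLast?_cons hl)]

/-- `vstarSplit a z n = (i, j)` records that the `n`-th star of `a ++ z` is
`a^{i*} ++ z^{j*}`: the star deletes inside `a` exactly when the last letter of `a` starts a
non-decreasing run to the end of the string. -/
def vstarSplit (a z : List α) : ℕ → ℕ × ℕ
  | 0 => (0, 0)
  | n + 1 =>
    let p := vstarSplit a z n
    if ∃ l ∈ (vstar^[p.1] a).getLast?, (l :: vstar^[p.2] z).IsChain (· ≤ ·) then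
      (p.1 + 1, p.2)
    else (p.1, p.2 + 1)

section vstarSplit

variable {a z : List α}

theorem vstarSplit_succ {n i j : ℕ} (hn : vstarSplit a z n = (i, j)) :
    vstarSplit a z (n + 1) =
      if ∃ l ∈ (vstar^[i] a).getLast?, (l :: vstar^[j] z).IsChain (· ≤ ·) then (i + 1, j)
      else (i, j + 1) := by
  rw [vstarSplit, hn]

theorem vstarSplit_fst_add_snd (n : ℕ) : (vstarSplit a z n).1 + (vstarSplit a z n).2 = n := by
  induction n with
  | zero => rfl
  | succ n ih => rw [vstarSplit_succ Prod.mk.eta.symm]; split_ifs <;> simp only <;> omega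

theorem vstar_iterate_append (n : ℕ) :
    vstar^[n] (a ++ z) = vstar^[(vstarSplit a z n).1] a ++ vstar^[(vstarSplit a z n).2] z := by
  induction n with
  | zero => rfl
  | succ n ih =>
    rw [Function.iterate_succ_apply', ih, vstarSplit_succ Prod.mk.eta.symm]
    split_ifs with h
    · obtain ⟨l, hl, hc⟩ := h
      rw [vstar_append_of_isChain hl hc, Function.iterate_succ_apply']
    · push Not at h
      rw [vstar_append_of_not_isChain h, Function.iterate_succ_apply']

/-- The last letter of the surviving part of `a` only grows (`le_of_mem_getLast?_vstar`), so the
condition that made the latest star delete inside `z` persists. -/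
theorem not_isChain_of_vstarSplit {n i j : ℕ} (hn : vstarSplit a z n = (i, j + 1)) :
    ∀ l ∈ (vstar^[i] a).getLast?, ¬ (l :: vstar^[j] z).IsChain (· ≤ ·) := by
  induction n generalizing i j with
  | zero => simp [vstarSplit] at hn
  | succ n ih =>
    rcases hp : vstarSplit a z n with ⟨i₀, j₀⟩
    rw [vstarSplit_succ hp] at hn
    split_ifs at hn with h
    · obtain ⟨rfl, rfl⟩ := Prod.mk.inj hn
      intro l hl hc
      rw [Function.iterate_succ_apply'] at hl
      obtain ⟨l₀, hl₀⟩ : ∃ l₀, l₀ ∈ (vstar^[i₀] a).getLast? :=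
        ⟨_, List.getLast?_eq_getLast_of_ne_nil fun h0 => by simp [h0, vstar] at hl⟩
      exact ih hp l₀ hl₀ (isChain_cons_of_le (le_of_mem_getLast?_vstar hl₀ hl) hc)
    · obtain ⟨rfl, hj⟩ := Prod.mk.inj hn
      obtain rfl : j₀ = j := Nat.succ_injective hj
      push Not at h
      exact h

end vstarSplit

/-- A state of the split path that still holds a letter of `a` can lie on the star path of `z`
only by violating `isChain_cons_vstar_iterate_of_eq_append` there. -/
theorem not_isChain_of_vstar_iterate_eq_append {a z : List α} {n i j s : ℕ}
    (hn : vstarSplit a z n = (i, j)) (ha : vstar^[i] a ≠ [])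
    (h : vstar^[s] z = vstar^[i] a ++ vstar^[j] z) :
    vstar^[s] z = vstar^[i] a ++ vstar^[(vstar^[i] a).length] (vstar^[s] z) ∧
      ∃ l ∈ (vstar^[i] a).getLast?,
        ¬ (l :: vstar^[(vstar^[i] a).length - 1] (vstar^[s] z)).IsChain (· ≤ ·) := by
  set B := vstar^[i] a
  obtain ⟨l, hl⟩ : ∃ l, l ∈ B.getLast? := ⟨_, List.getLast?_eq_getLast_of_ne_nil ha⟩
  have hlen := congrArg List.length h
  simp only [List.length_append, length_vstar_iterate] at hlen
  have hB := List.length_pos_iff.mpr ha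
  obtain ⟨j', rfl⟩ : ∃ j', j = j' + 1 := ⟨j - 1, by omega⟩
  have hnc := not_isChain_of_vstarSplit hn l hl
  have hz := List.length_pos_iff.mpr (ne_nil_of_not_isChain_cons hnc)
  rw [length_vstar_iterate] at hz
  rw [← Function.iterate_add_apply, ← Function.iterate_add_apply,
    show B.length + s = j' + 1 by omega, show B.length - 1 + s = j' by omega]
  exact ⟨h, l, hl, hnc⟩

/-- If the first `|B|` stars of `W = B ++ v` leave exactly `v`, then every step deleted a letter
of `B`: otherwise `v` would itself return to one of its stars after a shorter prefix, which is
excluded inductively. -/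
theorem isChain_cons_vstar_iterate_of_eq_append {W B : List α}
    (h : W = B ++ vstar^[B.length] W) :
    ∀ l ∈ B.getLast?, (l :: vstar^[B.length - 1] W).IsChain (· ≤ ·) := by
  induction hN : W.length using Nat.strong_induction_on generalizing W B with
  | _ N ih =>
  intro l hl
  set v := vstar^[B.length] W with hv
  obtain ⟨k, hk⟩ := Nat.exists_eq_add_one.mpr
    (List.length_pos_iff.mpr (List.mem_getLast?_eq_getLast hl).1)
  rcases hsplit : vstarSplit B v B.length with ⟨i, j⟩
  have hsum := vstarSplit_fst_add_snd (a := B) (z := v) B.length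
  have hv' := vstar_iterate_append (a := B) (z := v) B.length
  rw [hsplit] at hsum hv'
  rw [← h, ← hv] at hv'
  by_cases hB' : vstar^[i] B = []
  · have hlenB := congrArg List.length hB'
    rw [length_vstar_iterate, List.length_nil] at hlenB
    rcases hsplitk : vstarSplit B v k with ⟨i₀, j₀⟩
    have hstep := vstarSplit_succ hsplitk
    rw [← hk, hsplit] at hstep
    split_ifs at hstep with hc
    swap
    · obtain ⟨-, rfl⟩ := Prod.mk.inj hstep
      simp only at hsum
      omega
    obtain ⟨rfl, rfl⟩ := Prod.mk.inj hstep
    obtain rfl : j = 0 := by omega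
    obtain ⟨c, hc, hcv⟩ := hc
    rw [Function.iterate_succ_apply'] at hB'
    have hWk := vstar_iterate_append (a := B) (z := v) k
    rw [← h, hsplitk, eq_singleton_of_vstar_eq_nil hc hB'] at hWk
    rw [hk, Nat.add_sub_cancel, hWk, List.singleton_append, List.isChain_cons_cons]
    exact ⟨le_of_mem_getLast?_vstar_iterate _ hl hc, hcv⟩
  · obtain ⟨hret, l', hl', hnc⟩ :=
      not_isChain_of_vstar_iterate_eq_append (s := 0) hsplit hB' hv'
    refine absurd (ih v.length ?_ hret rfl l' hl') hnc
    have := congrArg List.length h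
    simp only [List.length_append] at this
    omega

/-- The letter comparison in the definition of `VLess`: `x` is smaller than `y` at the last
position where they differ. -/
def LtAtLastDiff (x y : List α) : Prop :=
  ∃ j, j < x.length ∧ (∀ j', j < j' → x[j']? = y[j']?) ∧
    ∃ a b, x[j]? = some a ∧ y[j]? = some b ∧ a < b

theorem LtAtLastDiff.cons {x y : List α} (h : LtAtLastDiff x y) (a b : α) :
    LtAtLastDiff (a :: x) (b :: y) := by
  obtain ⟨j, hj, heq, c, d, hc, hd, hcd⟩ := h
  refine ⟨j + 1, by simpa using hj, fun j' hj' => ?_, c, d, hc, hd, hcd⟩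
  obtain ⟨i, rfl⟩ : ∃ i, j' = i + 1 := ⟨j' - 1, by omega⟩
  exact heq i (by omega)

theorem ltAtLastDiff_vstar {c : α} {S : List α} (h : ¬ (c :: S).IsChain (· ≤ ·)) :
    LtAtLastDiff S (c :: vstar S) := by
  induction S generalizing c with
  | nil => simp at h
  | cons s S ih =>
    by_cases hs : (s :: S).IsChain (· ≤ ·)
    · rw [vstar_cons_of_isChain hs]
      have hsc : s < c := by
        by_contra hsc
        exact h (List.isChain_cons_cons.mpr ⟨not_lt.mp hsc, hs⟩)
      refine ⟨0, by simp, fun j' hj' => ?_, s, c, rfl, rfl, hsc⟩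
      obtain ⟨i, rfl⟩ : ∃ i, j' = i + 1 := ⟨j' - 1, by omega⟩
      rfl
    · rw [vstar_cons_of_not_isChain hs]
      exact (ih hs).cons s c

theorem exists_vstarSplit_eq_singleton {a : List α} (z : List α) (ha : a ≠ []) :
    ∃ κ i j c, vstarSplit a z κ = (i, j) ∧ vstarSplit a z (κ + 1) = (i + 1, j) ∧
      vstar^[i] a = [c] ∧ ∀ n ≤ κ, vstar^[(vstarSplit a z n).1] a ≠ [] := by
  have hex : ∃ n, vstar^[(vstarSplit a z n).1] a = [] := by
    refine ⟨a.length + z.length, ?_⟩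
    have h := congrArg List.length (vstar_iterate_append (a := a) (z := z) (a.length + z.length))
    simp only [length_vstar_iterate, List.length_append] at h
    rw [← List.length_eq_zero_iff, length_vstar_iterate]
    omega
  obtain ⟨κ, hκ⟩ : ∃ κ, Nat.find hex = κ + 1 := Nat.exists_eq_add_one.mpr <|
    Nat.pos_of_ne_zero fun h0 => ha (by simpa [h0, vstarSplit] using Nat.find_spec hex)
  have hlive : ∀ n ≤ κ, vstar^[(vstarSplit a z n).1] a ≠ [] :=
    fun n hn => Nat.find_min hex (by omega)
  rcases hsplit : vstarSplit a z κ with ⟨i, j⟩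
  have hi := hlive κ le_rfl
  have hdead := Nat.find_spec hex
  rw [hsplit] at hi
  have hstep := vstarSplit_succ hsplit
  rw [hκ, hstep] at hdead
  split_ifs at hstep hdead with hc
  · obtain ⟨c, hc, -⟩ := hc
    rw [Function.iterate_succ_apply'] at hdead
    exact ⟨κ, i, j, c, hsplit, hstep, eq_singleton_of_vstar_eq_nil hc hdead, hlive⟩
  · exact absurd hdead hi

theorem vless_append_of_ne_nil {a : List α} (z : List α) (ha : a ≠ []) : VLess z (a ++ z) := by
  by_cases H : ∃ k, vstar^[k] (a ++ z) = z
  · obtain ⟨k, hk⟩ := H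
    refine Or.inl ⟨k, Nat.pos_of_ne_zero ?_, hk⟩
    rintro rfl
    exact ha (by simpa using congrArg List.length hk)
  refine Or.inr ⟨H, fun ⟨k, hk⟩ => ?_, ?_⟩
  · have hlen := congrArg List.length hk
    simp only [length_vstar_iterate, List.length_append] at hlen
    have := List.length_pos_iff.mpr ha
    omega
  obtain ⟨κ, i, j, c, hsplit, hsplit', hc, hlive⟩ := exists_vstarSplit_eq_singleton z ha
  have hyκ := vstar_iterate_append (a := a) (z := z) κ
  have hyκ' := vstar_iterate_append (a := a) (z := z) (κ + 1)
  rw [hsplit, hc, List.singleton_append] at hyκ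
  rw [hsplit', Function.iterate_succ_apply' vstar i, hc, vstar_singleton, List.nil_append] at hyκ'
  obtain ⟨m, rfl⟩ : ∃ m, j = m + 1 :=
    Nat.exists_eq_add_one.mpr (Nat.pos_of_ne_zero fun h0 => H ⟨κ + 1, by rw [hyκ', h0]; rfl⟩)
  have hnc := not_isChain_of_vstarSplit hsplit c (by rw [hc]; rfl)
  have hmz := List.length_pos_iff.mpr (ne_nil_of_not_isChain_cons hnc)
  rw [length_vstar_iterate] at hmz
  refine ⟨m, κ, hyκ'.symm, fun s' t' h' => ?_, ?_⟩
  · by_cases ht : t' < κ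
    · rw [vstar_iterate_append] at h'
      obtain ⟨hW, l, hl, hnc'⟩ :=
        not_isChain_of_vstar_iterate_eq_append Prod.mk.eta.symm (hlive (t' + 1) ht) h'
      exact absurd (isChain_cons_vstar_iterate_of_eq_append hW l hl) hnc'
    · rw [show t' + 1 = (t' - κ) + (κ + 1) by omega, Function.iterate_add_apply vstar (t' - κ),
        hyκ', ← Function.iterate_add_apply] at h'
      have := congrArg List.length h'
      simp only [length_vstar_iterate] at this
      omega
  · rw [hyκ, Function.iterate_succ_apply']
    exact ltAtLastDiff_vstar hnc

theorem vless_suffix_compatible_general {α : Type*} [LinearOrder α]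
    (r : List α)
    (s₁ s₂ : List α)
    (hs₂ : s₂ <:+ s₁) (hs₂ne : s₂ ≠ s₁) :
    VLess s₂ s₁ ∧ VLess (s₂ ++ r) (s₁ ++ r) := by
  obtain ⟨a, rfl⟩ := hs₂
  have ha : a ≠ [] := by rintro rfl; exact hs₂ne rfl
  refine ⟨vless_append_of_ne_nil _ ha, ?_⟩
  rw [List.append_assoc]
  exact vless_append_of_ne_nil _ ha

/-- Compatibility of suffix sorting (Lemma 7): let `x = p·u·r` with `u` a
substring of `x`, let `s₁` be a nonempty suffix of `u` and `s₂` a proper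
suffix of `s₁`. Then `s₂ ≺ s₁` (their order with respect to `u`) and
`s₂r ≺ s₁r` (the corresponding suffixes of `x` compare the same way). -/
theorem vless_suffix_compatible {α : Type*} [LinearOrder α]
    (x p u r : List α) (hx : x = p ++ u ++ r)
    (s₁ s₂ : List α) (hs₁ : s₁ <:+ u) (hs₁ne : s₁ ≠ [])
    (hs₂ : s₂ <:+ s₁) (hs₂ne : s₂ ≠ s₁) :
    VLess s₂ s₁ ∧ VLess (s₂ ++ r) (s₁ ++ r) :=
  vless_suffix_compatible_general r s₁ s₂ hs₂ hs₂ne
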